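/- arXiv:0711.0240 — 2 statements merged into one kernel-verified Lean document; each statement's English description precedes it below -/
import Mathlib

section
/- Let (A_n) be a sequence of measurable subsets of a probability space such that there exists K > 0 with μ(A_n ∩ A_m) ≤ K·μ(A_n)·μ(A_m) for all m > n, and such that ∑ μ(A_n) = ∞. Then the measure of the limsup set {x : x ∈ A_n for infinitely many n} is at least 1/K. -/
open MeasureTheory Filter
open scoped ENNReal NNReal Topology

/-!
For finitely many of the sets with total mass `S`, Cauchy–Schwarz applied to `∑ 1_{A i}`, which
vanishes off `⋃ A i`, gives `S² ≤ μ (⋃ A i) · ∑_{i,j} μ (A i ∩ A j)`, and the correlation bound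
makes the double sum at most `S + K S²`. Hence every tail union `⋃_{n ≥ N} A n` has measure at
least `(S⁻¹ + K)⁻¹`; letting `S → ∞` along the divergent series gives `K⁻¹`, and the limsup is
the decreasing intersection of the tail unions.
-/

theorem ENNReal.tsum_add_nat_eq_top {f : ℕ → ℝ≥0∞} (hf : ∑' n, f n = ∞) (hfin : ∀ n, f n ≠ ∞)
    (N : ℕ) : ∑' n, f (n + N) = ∞ := by
  rw [← ENNReal.summable.sum_add_tsum_nat_add' (k := N), ENNReal.add_eq_top] at hf
  exact hf.resolve_left (ENNReal.sum_ne_top.2 fun n _ => hfin n)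

theorem ENNReal.inv_inv_add_le_of_sq_le_mul {a s K : ℝ≥0∞} (hs₀ : s ≠ 0) (hs : s ≠ ∞)
    (h : s ^ 2 ≤ a * (s + K * s ^ 2)) : (s⁻¹ + K)⁻¹ ≤ a := by
  have hs2 : s ^ 2 * (s⁻¹ + K) = s + K * s ^ 2 := by
    rw [mul_add, sq, mul_assoc, ENNReal.mul_inv_cancel hs₀ hs, mul_one, mul_comm K]
  rw [ENNReal.inv_le_iff_inv_le, ← ENNReal.mul_le_mul_iff_right (pow_ne_zero 2 hs₀)
    (ENNReal.pow_ne_top hs), hs2, ← div_eq_mul_inv]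
  exact ENNReal.div_le_of_le_mul' h

namespace MeasureTheory

variable {Ω : Type*} [MeasurableSpace Ω] {μ : Measure Ω}

theorem sq_lintegral_le_measure_mul_lintegral_sq {f : Ω → ℝ≥0∞} (hf : AEMeasurable f μ)
    {U : Set Ω} (hfU : Function.support f ⊆ U) :
    (∫⁻ x, f x ∂μ) ^ 2 ≤ μ U * ∫⁻ x, f x ^ 2 ∂μ := by
  have holder := ENNReal.lintegral_mul_le_Lp_mul_Lq (μ.restrict U) Real.HolderConjugate.two_two
    hf.restrict (aemeasurable_const (b := (1 : ℝ≥0∞)))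
  simp only [Pi.mul_apply, mul_one, ENNReal.rpow_two, one_pow, one_mul, lintegral_const,
    Measure.restrict_apply_univ, setLIntegral_eq_of_support_subset hfU] at holder
  rw [← ENNReal.mul_rpow_of_nonneg _ _ (by norm_num), one_div,
    ENNReal.le_rpow_inv_iff two_pos, ENNReal.rpow_two, mul_comm] at holder
  exact holder.trans (by gcongr; exact Measure.restrict_le_self)

theorem lintegral_sum_indicator_one {ι : Type*} (I : Finset ι) {A : ι → Set Ω}
    (hA : ∀ i, MeasurableSet (A i)) :
    ∫⁻ x, ∑ i ∈ I, (A i).indicator 1 x ∂μ = ∑ i ∈ I, μ (A i) := by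
  rw [lintegral_finsetSum _ fun i _ => measurable_one.indicator (hA i)]
  simp only [lintegral_indicator_one (hA _)]

theorem lintegral_sq_sum_indicator_one {ι : Type*} (I : Finset ι) {A : ι → Set Ω}
    (hA : ∀ i, MeasurableSet (A i)) :
    ∫⁻ x, (∑ i ∈ I, (A i).indicator 1 x) ^ 2 ∂μ = ∑ i ∈ I, ∑ j ∈ I, μ (A i ∩ A j) := by
  have hmul : ∀ i j x, (A i).indicator (1 : Ω → ℝ≥0∞) x * (A j).indicator 1 x
      = (A i ∩ A j).indicator 1 x := fun i j x => by rw [Set.inter_indicator_one, Pi.mul_apply]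
  simp_rw [sq, Finset.sum_mul_sum, hmul]
  rw [lintegral_finsetSum _ fun i _ => Finset.measurable_sum _ fun j _ =>
    measurable_one.indicator ((hA i).inter (hA j))]
  exact Finset.sum_congr rfl fun i _ => lintegral_sum_indicator_one I fun j => (hA i).inter (hA j)

theorem sum_sum_measure_inter_le {ι : Type*} (I : Finset ι) {A : ι → Set Ω} {K : ℝ≥0∞}
    (hcorr : ∀ i j, i ≠ j → μ (A i ∩ A j) ≤ K * μ (A i) * μ (A j)) :
    ∑ i ∈ I, ∑ j ∈ I, μ (A i ∩ A j) ≤ ∑ i ∈ I, μ (A i) + K * (∑ i ∈ I, μ (A i)) ^ 2 := by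
  classical
  calc ∑ i ∈ I, ∑ j ∈ I, μ (A i ∩ A j)
      ≤ ∑ i ∈ I, ∑ j ∈ I, ((if i = j then μ (A i) else 0) + K * μ (A i) * μ (A j)) := by
        gcongr with i _ j _
        split_ifs with hij
        · subst hij
          exact (measure_mono Set.inter_subset_left).trans le_self_add
        · exact (hcorr i j hij).trans le_add_self
    _ = ∑ i ∈ I, μ (A i) + K * (∑ i ∈ I, μ (A i)) ^ 2 := by
        simp +contextual only [Finset.sum_add_distrib, Finset.sum_ite_eq, if_true,
          ← Finset.mul_sum, ← Finset.sum_mul, sq, mul_assoc]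

theorem sq_sum_measure_le_measure_biUnion_mul_sum_sum_measure_inter {ι : Type*} (I : Finset ι)
    {A : ι → Set Ω} (hA : ∀ i, MeasurableSet (A i)) :
    (∑ i ∈ I, μ (A i)) ^ 2 ≤ μ (⋃ i ∈ I, A i) * ∑ i ∈ I, ∑ j ∈ I, μ (A i ∩ A j) := by
  rw [← lintegral_sum_indicator_one I hA, ← lintegral_sq_sum_indicator_one I hA]
  refine sq_lintegral_le_measure_mul_lintegral_sq
    (Finset.measurable_sum _ fun i _ => measurable_one.indicator (hA i)).aemeasurable ?_
  intro x hx
  obtain ⟨i, hi, hxi⟩ := Finset.exists_ne_zero_of_sum_ne_zero hx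
  exact Set.mem_biUnion hi (Set.mem_of_indicator_ne_zero hxi)

theorem inv_inv_sum_measure_add_le_measure_iUnion [IsFiniteMeasure μ] {ι : Type*} [LinearOrder ι]
    {A : ι → Set Ω} (hA : ∀ i, MeasurableSet (A i)) {K : ℝ≥0∞}
    (hcorr : ∀ i j, i < j → μ (A i ∩ A j) ≤ K * μ (A i) * μ (A j)) (I : Finset ι)
    (hI : ∑ i ∈ I, μ (A i) ≠ 0) :
    ((∑ i ∈ I, μ (A i))⁻¹ + K)⁻¹ ≤ μ (⋃ i, A i) := by
  have hcorr' : ∀ i j, i ≠ j → μ (A i ∩ A j) ≤ K * μ (A i) * μ (A j) := by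
    intro i j hij
    rcases hij.lt_or_gt with hij | hji
    · exact hcorr i j hij
    · rw [Set.inter_comm, mul_right_comm]
      exact hcorr j i hji
  refine ENNReal.inv_inv_add_le_of_sq_le_mul hI
    (ENNReal.sum_ne_top.2 fun i _ => measure_ne_top μ _) ?_
  calc (∑ i ∈ I, μ (A i)) ^ 2
      ≤ μ (⋃ i ∈ I, A i) * ∑ i ∈ I, ∑ j ∈ I, μ (A i ∩ A j) :=
        sq_sum_measure_le_measure_biUnion_mul_sum_sum_measure_inter I hA
    _ ≤ μ (⋃ i, A i) * (∑ i ∈ I, μ (A i) + K * (∑ i ∈ I, μ (A i)) ^ 2) :=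
        mul_le_mul' (measure_mono (Set.iUnion₂_subset fun i _ => Set.subset_iUnion A i))
          (sum_sum_measure_inter_le I hcorr')

theorem inv_le_measure_iUnion_of_tsum_eq_top [IsFiniteMeasure μ] {A : ℕ → Set Ω}
    (hA : ∀ n, MeasurableSet (A n)) {K : ℝ≥0∞}
    (hcorr : ∀ i j, i < j → μ (A i ∩ A j) ≤ K * μ (A i) * μ (A j))
    (hdiv : ∑' n, μ (A n) = ∞) :
    K⁻¹ ≤ μ (⋃ n, A n) := by
  have hsum : Tendsto (fun M => ∑ n ∈ Finset.range M, μ (A n)) atTop (𝓝 ∞) :=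
    hdiv ▸ ENNReal.tendsto_nat_tsum _
  have hlim : Tendsto (fun M => ((∑ n ∈ Finset.range M, μ (A n))⁻¹ + K)⁻¹) atTop (𝓝 K⁻¹) := by
    simpa using (hsum.inv.add tendsto_const_nhds).inv
  refine le_of_tendsto hlim ?_
  filter_upwards [hsum.eventually_ne ENNReal.top_ne_zero] with M hM
  exact inv_inv_sum_measure_add_le_measure_iUnion hA hcorr _ hM

theorem measure_limsup_atTop_eq_iInf [IsFiniteMeasure μ] {A : ℕ → Set Ω}
    (hA : ∀ n, NullMeasurableSet (A n) μ) :
    μ (limsup A atTop) = ⨅ N, μ (⋃ n ≥ N, A n) := by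
  rw [limsup_eq_iInf_iSup_of_nat]
  refine Antitone.measure_iInter (fun N M hNM => Set.biUnion_mono (fun n hn => hNM.trans hn)
    fun _ _ => subset_rfl) (fun N => .iUnion fun n => .iUnion fun _ => hA n)
    ⟨0, measure_ne_top μ _⟩

end MeasureTheory

theorem paley_zygmund_borel_cantelli_general
    {Ω : Type*} [MeasurableSpace Ω] (μ : Measure Ω) [IsProbabilityMeasure μ]
    (A : ℕ → Set Ω) (hA : ∀ n, MeasurableSet (A n))
    (K : ℝ≥0)
    (hcorr : ∀ m n : ℕ, n < m → μ (A n ∩ A m) ≤ (K : ℝ≥0∞) * μ (A n) * μ (A m))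
    (hdiv : ∑' n, μ (A n) = ⊤) :
    (K : ℝ≥0∞)⁻¹ ≤ μ (Filter.limsup A Filter.atTop) := by
  rw [measure_limsup_atTop_eq_iInf fun n => (hA n).nullMeasurableSet]
  refine le_iInf fun N => ?_
  rw [Set.iUnion_ge_eq_iUnion_nat_add A N]
  exact inv_le_measure_iUnion_of_tsum_eq_top (fun n => hA _) (fun i j hij => hcorr _ _ (by omega))
    (ENNReal.tsum_add_nat_eq_top hdiv (fun n => measure_ne_top μ _) N)

/-- Paley–Zygmund / Kochen–Stone type second Borel–Cantelli lemma. -/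
theorem paley_zygmund_borel_cantelli
    {Ω : Type*} [MeasurableSpace Ω] (μ : Measure Ω) [IsProbabilityMeasure μ]
    (A : ℕ → Set Ω) (hA : ∀ n, MeasurableSet (A n))
    (K : ℝ≥0) (hK : 0 < K)
    (hcorr : ∀ m n : ℕ, n < m → μ (A n ∩ A m) ≤ (K : ℝ≥0∞) * μ (A n) * μ (A m))
    (hdiv : ∑' n, μ (A n) = ⊤) :
    (K : ℝ≥0∞)⁻¹ ≤ μ (Filter.limsup A Filter.atTop) :=
  paley_zygmund_borel_cantelli_general μ A hA K hcorr hdiv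
end

section
/- Let (t_n) be a sequence with t_0 large and t_{n+1} < t_n + log t_{n+1}, t_{n+1} < 2 t_n. If t_n < C·n·log n·log log n for some n ≥ 3 and C ≥ 1, and n is sufficiently large, then t_{n+1} < C·(n+1)·log(n+1)·log log(n+1). -/
/-!
With `f x = C x log x log log x`, the increment `f (n + 1) - f n` is at least `C log n log log n`,
while `t (n + 1) - t n < log t (n + 1) < log (2 f n)`. Expanding,
`log (2 f n) = log 2 + log C + log n + log log n + log log log n`, which is at most
`C log n log log n` as soon as `log n ≥ 5` and `log log n ≥ 2`.
-/

open Real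

noncomputable def growthBound (C x : ℝ) : ℝ := C * x * log x * log (log x)

lemma growthBound_add_le_growthBound_add_one {C x : ℝ} (hC : 0 ≤ C) (hx : exp 1 ≤ x) :
    growthBound C x + C * log x * log (log x) ≤ growthBound C (x + 1) := by
  have hx0 : 0 < x := (exp_pos 1).trans_le hx
  have hL : 1 ≤ log x := by simpa using log_le_log (exp_pos 1) hx
  have hL' : log x ≤ log (x + 1) := log_le_log hx0 (by linarith)
  calc growthBound C x + C * log x * log (log x) = C * (x + 1) * log x * log (log x) := by
        unfold growthBound; ring
    _ ≤ C * (x + 1) * log (x + 1) * log (log (x + 1)) := by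
        have hLL := log_nonneg hL
        gcongr
        exact mul_nonneg (by positivity) (log_nonneg (by linarith))

lemma add_add_two_mul_le_mul {C L M : ℝ} (hC : 1 ≤ C) (hL : 5 ≤ L) (hM : 2 ≤ M) :
    C + L + 2 * M ≤ C * L * M := by
  nlinarith [mul_nonneg (sub_nonneg.2 hC) (by nlinarith : (0:ℝ) ≤ L * M - 1),
    mul_nonneg (by linarith : (0:ℝ) ≤ L - 5) (by linarith : (0:ℝ) ≤ M - 2)]

lemma log_two_mul_growthBound_le {C x : ℝ} (hC : 1 ≤ C) (hx : exp (exp 2) ≤ x) :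
    log (2 * growthBound C x) ≤ C * log x * log (log x) := by
  have hL : exp 2 ≤ log x := by simpa using log_le_log (exp_pos _) hx
  have hLL : 2 ≤ log (log x) := by simpa using log_le_log (exp_pos _) hL
  have hL5 : 5 ≤ log x := by linarith [quadratic_le_exp_of_nonneg zero_le_two]
  have hx0 : 0 < x := (exp_pos _).trans_le hx
  have hsplit : log (2 * growthBound C x) =
      log 2 + log C + log x + log (log x) + log (log (log x)) := by
    unfold growthBound
    rw [log_mul, log_mul, log_mul, log_mul]
    · ring
    all_goals positivity
  have h2 : log 2 ≤ 1 := by linarith [log_le_sub_one_of_pos zero_lt_two]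
  have hlogC : log C ≤ C - 1 := log_le_sub_one_of_pos (by linarith)
  have hlogLL : log (log (log x)) ≤ log (log x) - 1 := log_le_sub_one_of_pos (by linarith)
  linarith [add_add_two_mul_le_mul hC hL5 hLL]

lemma lt_add_of_lt_add_log {s y b δ : ℝ} (hy : 1 < y) (hs : s < y + log s) (hs2 : s < 2 * y)
    (hyb : y < b) (hδ : log (2 * b) ≤ δ) : s < b + δ := by
  have hδ0 : 0 ≤ δ := (log_nonneg (by linarith)).trans hδ
  rcases le_or_gt s y with hsy | hys
  · linarith
  · have hlog : log s < log (2 * b) := log_lt_log (by linarith) (by linarith)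
    linarith

/-- Inductive step: if `t_{n+1} < t_n + log t_{n+1}`, `t_{n+1} < 2 t_n` and
`t_n < C n log n log log n`, then for `n` sufficiently large
`t_{n+1} < C (n+1) log(n+1) log log(n+1)`. -/
theorem inductive_growth_step
    (C : ℝ) (hC : 1 ≤ C) :
    ∃ N : ℕ, 3 ≤ N ∧ ∀ (t : ℕ → ℝ) (n : ℕ), N ≤ n →
      1 < t n →
      t (n + 1) < t n + Real.log (t (n + 1)) →
      t (n + 1) < 2 * t n →
      t n < C * n * Real.log n * Real.log (Real.log n) →
      t (n + 1) < C * (n + 1) * Real.log (n + 1) * Real.log (Real.log (n + 1)) := by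
  refine ⟨max 3 ⌈exp (exp 2)⌉₊, le_max_left _ _, fun t n hn ht hrec hdouble hbound => ?_⟩
  have hn : exp (exp 2) ≤ n := Nat.ceil_le.1 (le_of_max_le_right hn)
  have hn1 : exp 1 ≤ n := le_trans (exp_le_exp.2 (by linarith [add_one_le_exp 2])) hn
  calc t (n + 1) < growthBound C n + C * log n * log (log n) :=
        lt_add_of_lt_add_log ht hrec hdouble hbound (log_two_mul_growthBound_le hC hn)
    _ ≤ growthBound C (n + 1) := growthBound_add_le_growthBound_add_one (by linarith) hn1
end
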